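/- For every integer n ≥ 1, the image of the generator b in G_n = ⟨a, b ∣ a b a⁻¹ b, a^{2n}⟩ has infinite order (it is not of finite order). -/

import Mathlib

namespace Stmt10

def a : FreeGroup (Fin 2) := FreeGroup.of 0
def b : FreeGroup (Fin 2) := FreeGroup.of 1

/-- The relators `a b a⁻¹ b` and `a^(2n)`. -/
def rels (n : ℕ) : Set (FreeGroup (Fin 2)) := {a * b * a⁻¹ * b, a ^ (2 * n)}

/-- The group `G_n = ⟨a, b ∣ a b a⁻¹ b, a^(2n)⟩`. -/
abbrev G (n : ℕ) := PresentedGroup (rels n)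

/-- Target map into the infinite dihedral group. -/
def f : Fin 2 → DihedralGroup 0 := ![DihedralGroup.sr 0, DihedralGroup.r 1]

lemma sr_sq (i : ZMod 0) : DihedralGroup.sr i * DihedralGroup.sr i = 1 := by
  simp [DihedralGroup.sr_mul_sr]

lemma lift_rels (n : ℕ) : ∀ r ∈ rels n, FreeGroup.lift f r = 1 := by
  intro r hr
  rcases hr with h | h
  · subst h
    simp only [a, b, map_mul, map_inv, FreeGroup.lift_apply_of, f]
    decide
  · rw [Set.mem_singleton_iff] at h
    subst h
    simp only [a, map_pow, FreeGroup.lift_apply_of, f, Matrix.cons_val_zero]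
    have : (DihedralGroup.sr (0 : ZMod 0)) ^ (2 * n)
        = ((DihedralGroup.sr 0 * DihedralGroup.sr 0 : DihedralGroup 0)) ^ n := by
      rw [pow_mul, sq]
    rw [this, sr_sq, one_pow]

lemma r_one_inf : ¬ IsOfFinOrder (DihedralGroup.r (1 : ZMod 0)) := by
  intro h
  obtain ⟨k, hk, hk1⟩ := h.exists_pow_eq_one
  have key : ∀ m : ℕ, (DihedralGroup.r (1 : ZMod 0)) ^ m = DihedralGroup.r (m : ZMod 0) := by
    intro m
    induction m with
    | zero => simp
    | succ m ih =>
        rw [pow_succ, ih, DihedralGroup.r_mul_r]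
        push_cast
        ring_nf
  have := key k
  rw [this, DihedralGroup.one_def] at hk1
  have : (k : ZMod 0) = 0 := by injection hk1
  have : (k : ℤ) = 0 := this
  omega

/-- For every `n ≥ 1`, the image of `b` in `G_n` has infinite order. -/
theorem b_infinite_order (n : ℕ) (hn : 1 ≤ n) :
    ¬ IsOfFinOrder (PresentedGroup.of (rels := rels n) 1) := by
  intro h
  have := MonoidHom.isOfFinOrder (PresentedGroup.toGroup (lift_rels n)) h
  rw [PresentedGroup.toGroup.of] at this
  exact r_one_inf this

end Stmt10
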